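/- arXiv:2508.15017 — 3 statements merged into one kernel-verified Lean document; each statement's English description precedes it below -/
import Mathlib

section
/- Let Δx > 0, E = [-Δx/2, Δx/2], and K ≥ 2. The linear functionals σ₋(v) = v(-Δx/2), σ₊(v) = v(Δx/2), and σ_k(v) = ((k+1)2^k/Δx^{k+1}) ∫_E x^k v(x) dx for k = 0, …, K-2, form a basis of the dual space of the space of real polynomials of degree at most K restricted to E; equivalently, a polynomial of degree at most K vanishing at both endpoints of E and with all moments ∫_E x^k v(x) dx = 0 for k = 0, …, K-2 is identically zero. -/
/-!
Dividing out the endpoint roots gives `v = (X - a)(X - b) q` with `deg q ≤ K - 2`. The moment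
conditions make `∫ q v = 0`, whereas `q v = -(x - a)(b - x) q²` has one sign on `(a, b)`, so `q = 0`.
-/

open Polynomial

theorem Polynomial.exists_eq_X_sub_C_mul_X_sub_C_mul {F : Type*} [Field F] {a b : F} (hab : a ≠ b)
    {v : F[X]} (ha : v.eval a = 0) (hb : v.eval b = 0) :
    ∃ q, v = (X - C a) * (X - C b) * q :=
  (isCoprime_X_sub_C_of_isUnit_sub (sub_ne_zero.mpr hab).isUnit).mul_dvd
    (dvd_iff_isRoot.mpr ha) (dvd_iff_isRoot.mpr hb)

theorem intervalIntegral.integral_eval_mul_eq_zero_of_moments {f : ℝ → ℝ} (hf : Continuous f)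
    {a b : ℝ} {n : ℕ} (hmom : ∀ k ≤ n, ∫ x in a..b, x ^ k * f x = 0)
    {q : ℝ[X]} (hq : q.natDegree ≤ n) :
    ∫ x in a..b, q.eval x * f x = 0 := by
  have hsum : ∀ x, q.eval x * f x = ∑ i ∈ Finset.range (n + 1), q.coeff i * (x ^ i * f x) := by
    intro x
    rw [eval_eq_sum_range' (Nat.lt_succ_of_le hq), Finset.sum_mul]
    exact Finset.sum_congr rfl fun i _ => by ring
  simp_rw [hsum]
  rw [intervalIntegral.integral_finsetSum (f := fun i x => q.coeff i * (x ^ i * f x))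
    fun i _ => (continuous_const.mul ((continuous_pow i).mul hf)).intervalIntegrable _ _]
  refine Finset.sum_eq_zero fun i hi => ?_
  rw [intervalIntegral.integral_const_mul, hmom i (Nat.lt_succ_iff.mp (Finset.mem_range.mp hi)),
    mul_zero]

theorem intervalIntegral.integral_bubble_mul_sq_eval_pos {a b : ℝ} (hab : a < b)
    {q : ℝ[X]} (hq : q ≠ 0) :
    0 < ∫ x in a..b, (x - a) * (b - x) * q.eval x ^ 2 := by
  obtain ⟨c, hc, hqc⟩ : ∃ c ∈ Set.Ioo a b, ¬ q.IsRoot c :=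
    ((Set.Ioo_infinite hab).sdiff (finite_setOfPred_isRoot hq)).nonempty
  rw [← intervalIntegral.integral_zero (a := a) (b := b) (μ := MeasureTheory.volume)]
  refine intervalIntegral.integral_lt_integral_of_continuousOn_of_le_of_exists_lt hab
    continuousOn_const (by fun_prop) (fun x hx => ?_) ⟨c, Set.Ioo_subset_Icc_self hc, ?_⟩
  · have : 0 ≤ x - a := by linarith [hx.1]
    have : 0 ≤ b - x := by linarith [hx.2]
    positivity
  · have : 0 < c - a := by linarith [hc.1]
    have : 0 < b - c := by linarith [hc.2]
    have : q.eval c ≠ 0 := hqc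
    positivity

theorem Polynomial.eq_zero_of_eval_eq_zero_of_moments {a b : ℝ} (hab : a < b) {n : ℕ}
    {v : ℝ[X]} (hdeg : v.natDegree ≤ n + 2) (ha : v.eval a = 0) (hb : v.eval b = 0)
    (hmom : ∀ k ≤ n, ∫ x in a..b, x ^ k * v.eval x = 0) :
    v = 0 := by
  obtain ⟨q, rfl⟩ := exists_eq_X_sub_C_mul_X_sub_C_mul hab.ne ha hb
  rcases eq_or_ne q 0 with rfl | hq
  · exact mul_zero _
  have hqdeg : q.natDegree ≤ n := by
    rw [natDegree_mul (mul_ne_zero (X_sub_C_ne_zero a) (X_sub_C_ne_zero b)) hq,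
      natDegree_mul (X_sub_C_ne_zero a) (X_sub_C_ne_zero b), natDegree_X_sub_C,
      natDegree_X_sub_C] at hdeg
    omega
  have horth := intervalIntegral.integral_eval_mul_eq_zero_of_moments
    (f := fun x => ((X - C a) * (X - C b) * q).eval x) (by fun_prop) hmom hqdeg
  have hneg : ∀ x, q.eval x * ((X - C a) * (X - C b) * q).eval x
      = -((x - a) * (b - x) * q.eval x ^ 2) := fun x => by
    simp only [eval_mul, eval_sub, eval_X, eval_C]
    ring
  simp_rw [hneg, intervalIntegral.integral_neg, neg_eq_zero] at horth
  exact absurd horth (intervalIntegral.integral_bubble_mul_sq_eval_pos hab hq).ne'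

theorem stmt_1_general (Δx : ℝ) (hΔx : 0 < Δx) (K : ℕ)
    (v : Polynomial ℝ) (hdeg : v.natDegree ≤ K)
    (hleft : v.eval (-(Δx/2)) = 0) (hright : v.eval (Δx/2) = 0)
    (hmom : ∀ k : ℕ, k ≤ K - 2 →
      (∫ x in (-(Δx/2))..(Δx/2), x^k * v.eval x) = 0) :
    v = 0 :=
  eq_zero_of_eval_eq_zero_of_moments (by linarith) (by omega) hleft hright hmom

/-- Unisolvence of the 1-d Active Flux element of degree `K`: a polynomial of
degree at most `K` vanishing at both endpoints of `E = [-Δx/2, Δx/2]` and with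
vanishing moments `∫_E x^k v(x) dx = 0` for `k = 0, …, K-2` is identically zero. -/
theorem stmt_1 (Δx : ℝ) (hΔx : 0 < Δx) (K : ℕ) (hK : 2 ≤ K)
    (v : Polynomial ℝ) (hdeg : v.natDegree ≤ K)
    (hleft : v.eval (-(Δx/2)) = 0) (hright : v.eval (Δx/2) = 0)
    (hmom : ∀ k : ℕ, k ≤ K - 2 →
      (∫ x in (-(Δx/2))..(Δx/2), x^k * v.eval x) = 0) :
    v = 0 :=
  stmt_1_general Δx hΔx K v hdeg hleft hright hmom
end

section
/- Let Δx > 0 and let p, r be polynomials of degree at most 2 with p(-Δx/2) = a, (1/Δx)∫_{-Δx/2}^{Δx/2} p = b, p(Δx/2) = c, and r(-Δx/2) = c, (1/Δx)∫_{-Δx/2}^{Δx/2} r = d, r(Δx/2) = e. Then (1/2)(p'(Δx/2) + r'(-Δx/2)) = (a - 3b + 3d - e)/Δx. -/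
/-!
On a cell `[-Δx/2, Δx/2]` a quadratic is determined by its two endpoint values and its mean.
Solving for the coefficients gives the one-sided derivatives at the cell edges,
`p'(Δx/2) = (2a - 6b + 4c)/Δx` and `r'(-Δx/2) = (-4c + 6d - 2e)/Δx`; in their average the shared
interface value `c` cancels.
-/

open Polynomial

theorem eval_eq_of_natDegree_le_two {q : ℝ[X]} (hq : q.natDegree ≤ 2) (x : ℝ) :
    q.eval x = q.coeff 0 + q.coeff 1 * x + q.coeff 2 * x ^ 2 := by
  simp [eval_eq_sum_range' (Nat.lt_succ_of_le hq), Finset.sum_range_succ]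

theorem derivative_eval_eq_of_natDegree_le_two {q : ℝ[X]} (hq : q.natDegree ≤ 2) (x : ℝ) :
    q.derivative.eval x = q.coeff 1 + 2 * q.coeff 2 * x := by
  rw [eval_eq_of_natDegree_le_two ((natDegree_derivative_le q).trans (by omega))]
  simp only [coeff_derivative, coeff_eq_zero_of_natDegree_lt (show q.natDegree < 3 by omega)]
  push_cast
  ring

theorem integral_eval_eq_of_natDegree_le_two {q : ℝ[X]} (hq : q.natDegree ≤ 2) (u v : ℝ) :
    ∫ x in u..v, q.eval x =
      q.coeff 0 * (v - u) + q.coeff 1 * (v ^ 2 - u ^ 2) / 2 + q.coeff 2 * (v ^ 3 - u ^ 3) / 3 := by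
  simp_rw [eval_eq_of_natDegree_le_two hq]
  rw [intervalIntegral.integral_add, intervalIntegral.integral_add, intervalIntegral.integral_const,
    intervalIntegral.integral_const_mul, intervalIntegral.integral_const_mul, integral_id, integral_pow]
  · rw [smul_eq_mul]
    ring
  all_goals exact Continuous.intervalIntegrable (by fun_prop) _ _

theorem derivative_eval_half_eq_of_natDegree_le_two {q : ℝ[X]} (hq : q.natDegree ≤ 2) {Δx : ℝ}
    (hΔx : Δx ≠ 0) :
    q.derivative.eval (Δx / 2) =
      (2 * q.eval (-(Δx / 2)) - 6 * ((1 / Δx) * ∫ x in (-(Δx / 2))..(Δx / 2), q.eval x)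
        + 4 * q.eval (Δx / 2)) / Δx := by
  rw [derivative_eval_eq_of_natDegree_le_two hq, integral_eval_eq_of_natDegree_le_two hq,
    eval_eq_of_natDegree_le_two hq, eval_eq_of_natDegree_le_two hq]
  field_simp
  ring

theorem derivative_eval_neg_half_eq_of_natDegree_le_two {q : ℝ[X]} (hq : q.natDegree ≤ 2) {Δx : ℝ}
    (hΔx : Δx ≠ 0) :
    q.derivative.eval (-(Δx / 2)) =
      (-4 * q.eval (-(Δx / 2)) + 6 * ((1 / Δx) * ∫ x in (-(Δx / 2))..(Δx / 2), q.eval x)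
        - 2 * q.eval (Δx / 2)) / Δx := by
  rw [derivative_eval_eq_of_natDegree_le_two hq, integral_eval_eq_of_natDegree_le_two hq,
    eval_eq_of_natDegree_le_two hq, eval_eq_of_natDegree_le_two hq]
  field_simp
  ring

theorem stmt_7 (Δx : ℝ) (hΔx : 0 < Δx) (a b c d e : ℝ)
    (p r : Polynomial ℝ) (hpdeg : p.natDegree ≤ 2) (hrdeg : r.natDegree ≤ 2)
    (hp1 : p.eval (-(Δx/2)) = a)
    (hp2 : (1/Δx) * (∫ x in (-(Δx/2))..(Δx/2), p.eval x) = b)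
    (hp3 : p.eval (Δx/2) = c)
    (hr1 : r.eval (-(Δx/2)) = c)
    (hr2 : (1/Δx) * (∫ x in (-(Δx/2))..(Δx/2), r.eval x) = d)
    (hr3 : r.eval (Δx/2) = e) :
    (1/2) * ((Polynomial.derivative p).eval (Δx/2) +
      (Polynomial.derivative r).eval (-(Δx/2))) =
    (a - 3*b + 3*d - e)/Δx := by
  rw [derivative_eval_half_eq_of_natDegree_le_two hpdeg hΔx.ne',
    derivative_eval_neg_half_eq_of_natDegree_le_two hrdeg hΔx.ne', hp1, hp2, hp3, hr1, hr2, hr3]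
  ring
end

section
/- The nine polynomials B₀ = (9/4)(4ξ²-1)(4η²-1), B_{±½,±½} (four corner functions as defined in the biparabolic Active Flux element), B_{±½,0} and B_{0,±½} (four edge-midpoint functions) form a basis of the tensor-product space Q² of polynomials of degree at most 2 in each of ξ and η on [-1/2,1/2]²; equivalently, any q ∈ Q² vanishing at the four corners and four edge midpoints and having zero average over the square is identically zero. -/
/-!
On each of the edges `ξ = ±1/2` lie three nodes (two corners and a midpoint), so `q` vanishes there
identically and factors as `(ξ² - 1/4) r(η)` with `r` quadratic; the midpoints `(0, ±1/2)` then give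
`r(±1/2) = 0`. Hence `q = k (ξ² - 1/4)(η² - 1/4)`, whose average over the square is `k / 36`.
-/

open Finset

section Quadratic

variable {K : Type*} [CommRing K]

def quadratic (a : Fin 3 → K) (t : K) : K := ∑ m : Fin 3, a m * t ^ (m : ℕ)

lemma quadratic_apply (a : Fin 3 → K) (t : K) :
    quadratic a t = a 0 + a 1 * t + a 2 * t ^ 2 := by
  simp [quadratic, Fin.sum_univ_three]

def biquadratic (c : Fin 3 → Fin 3 → K) (x y : K) : K :=
  quadratic (fun n => quadratic (fun m => c m n) x) y

lemma sum_sum_mul_pow_mul_pow (c : Fin 3 → Fin 3 → K) (x y : K) :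
    ∑ m : Fin 3, ∑ n : Fin 3, c m n * x ^ (m : ℕ) * y ^ (n : ℕ) = biquadratic c x y := by
  simp only [biquadratic, quadratic, sum_mul]
  exact sum_comm

variable [IsDomain K]

lemma coeff_one_eq_of_two_roots {a : Fin 3 → K} {x y : K} (hxy : x ≠ y)
    (hx : quadratic a x = 0) (hy : quadratic a y = 0) : a 1 = -(a 2 * (x + y)) := by
  rw [quadratic_apply] at hx hy
  rw [eq_neg_iff_add_eq_zero]
  refine (mul_eq_zero.1 ?_).resolve_left (sub_ne_zero.2 hxy)
  linear_combination hx - hy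

lemma quadratic_eq_zero_of_three_roots {a : Fin 3 → K} {x y z : K}
    (hxy : x ≠ y) (hxz : x ≠ z) (hyz : y ≠ z)
    (hx : quadratic a x = 0) (hy : quadratic a y = 0) (hz : quadratic a z = 0) : a = 0 := by
  have hxy' := coeff_one_eq_of_two_roots hxy hx hy
  have hxz' := coeff_one_eq_of_two_roots hxz hx hz
  have h2 : a 2 = 0 := by
    refine (mul_eq_zero.1 ?_).resolve_left (sub_ne_zero.2 hyz)
    linear_combination hxy' - hxz'
  have h1 : a 1 = 0 := by rw [hxy', h2, zero_mul, neg_zero]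
  have h0 : a 0 = 0 := by
    rw [quadratic_apply, h1, h2] at hx
    simpa using hx
  ext i
  fin_cases i <;> assumption

lemma quadratic_eq_of_two_roots {a : Fin 3 → K} {r s : K} (hrs : r ≠ s)
    (hr : quadratic a r = 0) (hs : quadratic a s = 0) (t : K) :
    quadratic a t = a 2 * ((t - r) * (t - s)) := by
  have h1 := coeff_one_eq_of_two_roots hrs hr hs
  rw [quadratic_apply] at hr ⊢
  linear_combination hr + (t - r) * h1

lemma biquadratic_eq_bubble {c : Fin 3 → Fin 3 → K} {r m s : K}
    (hrm : r ≠ m) (hrs : r ≠ s) (hms : m ≠ s)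
    (hedge : ∀ x ∈ ({r, s} : Set K), ∀ y ∈ ({r, m, s} : Set K), biquadratic c x y = 0)
    (hmid : ∀ y ∈ ({r, s} : Set K), biquadratic c m y = 0) (x y : K) :
    biquadratic c x y = c 2 2 * ((x - r) * (x - s) * ((y - r) * (y - s))) := by
  have hcol : ∀ x ∈ ({r, s} : Set K), ∀ n, quadratic (fun k => c k n) x = 0 := fun x hx n =>
    congrFun (quadratic_eq_zero_of_three_roots hrm hrs hms (hedge x hx r (by simp))
      (hedge x hx m (by simp)) (hedge x hx s (by simp))) n
  have hfactor (x y : K) : biquadratic c x y = (x - r) * (x - s) * quadratic (c 2) y := by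
    simp_rw [biquadratic, quadratic_eq_of_two_roots hrs (hcol r (by simp) _) (hcol s (by simp) _),
      quadratic_apply]
    ring
  have hrow : ∀ y ∈ ({r, s} : Set K), quadratic (c 2) y = 0 := fun y hy => by
    have h := hmid y hy
    rw [hfactor] at h
    exact (mul_eq_zero.1 h).resolve_left
      (mul_ne_zero (sub_ne_zero.2 hrm.symm) (sub_ne_zero.2 hms))
  rw [hfactor, quadratic_eq_of_two_roots hrs (hrow r (by simp)) (hrow s (by simp))]
  ring

end Quadratic

lemma integral_sub_mul_sub (a b : ℝ) :
    ∫ t in a..b, (t - a) * (t - b) = -(b - a) ^ 3 / 6 := by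
  have hderiv (t : ℝ) : HasDerivAt (fun t => (t - a) ^ 3 / 3 - (b - a) * (t - a) ^ 2 / 2)
      ((t - a) * (t - b)) t := by
    have h := (hasDerivAt_id' t).sub_const a
    exact (((h.pow 3).div_const 3).sub (((h.pow 2).const_mul (b - a)).div_const 2)).congr_deriv
      (by push_cast; ring)
  rw [intervalIntegral.integral_eq_sub_of_hasDerivAt (fun t _ => hderiv t)
    ((by fun_prop : Continuous fun t => (t - a) * (t - b)).intervalIntegrable _ _)]
  ring

/-- Unisolvence of the biparabolic (Q²) Active Flux element: a polynomial of
degree at most 2 in each variable vanishing at the four corners and four edge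
midpoints of `[-1/2,1/2]²` and with zero average over the square is zero. -/
theorem stmt_12 (q : ℝ → ℝ → ℝ) (c : Fin 3 → Fin 3 → ℝ)
    (hq : ∀ ξ η, q ξ η = ∑ m : Fin 3, ∑ n : Fin 3, c m n * ξ^(m : ℕ) * η^(n : ℕ))
    (hcorners : ∀ r ∈ ({-(1/2), 1/2} : Set ℝ), ∀ s ∈ ({-(1/2), 1/2} : Set ℝ), q r s = 0)
    (hedges : q (1/2) 0 = 0 ∧ q (-(1/2)) 0 = 0 ∧ q 0 (1/2) = 0 ∧ q 0 (-(1/2)) = 0)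
    (havg : (∫ ξ in (-(1/2 : ℝ))..(1/2), ∫ η in (-(1/2 : ℝ))..(1/2), q ξ η) = 0) :
    ∀ ξ η, q ξ η = 0 := by
  obtain rfl : q = biquadratic c := funext₂ fun ξ η => (hq ξ η).trans (sum_sum_mul_pow_mul_pow ..)
  obtain ⟨hright, hleft, htop, hbottom⟩ := hedges
  have hbubble := biquadratic_eq_bubble (c := c) (r := -(1/2)) (m := 0) (s := 1/2)
    (by norm_num) (by norm_num) (by norm_num)
    (fun x hx y hy => by
      rcases hy with rfl | rfl | rfl
      exacts [hcorners x hx _ (by simp), by rcases hx with rfl | rfl <;> assumption,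
        hcorners x hx _ (by simp)])
    (fun y hy => by rcases hy with rfl | rfl <;> assumption)
  have hk : c 2 2 = 0 := by
    simp only [hbubble, intervalIntegral.integral_const_mul, intervalIntegral.integral_mul_const,
      integral_sub_mul_sub] at havg
    norm_num at havg
    exact havg
  intro ξ η
  rw [hbubble, hk, zero_mul]
end
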